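/- arXiv:2310.14036 — 6 statements merged into one kernel-verified Lean document; each statement's English description precedes it below -/
import Mathlib

section
/- Let A be a real symmetric D×D matrix with eigenvalues λ_1,…,λ_D and orthonormal eigenvectors u_1,…,u_D, let h > 0 satisfy 1 - hλ_i ≠ 0 for all i, and let θ₀ ∈ ℝ^D. Then for every natural number n, ∑_{i=1}^D exp(n · log(1 - hλ_i)) ⟨θ₀, u_i⟩ u_i = (I - hA)^n θ₀ (an identity of vectors in ℂ^D whose right-hand side is real). That is, the principal flow's closed-form solution θ(t) = ∑_i e^{(t/h)·log(1-hλ_i)} ⟨θ₀,u_i⟩ u_i evaluated at t = nh reproduces the gradient descent iterates for the quadratic loss E(θ) = ½θᵀAθ exactly. -/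
/-! Each eigenvector `u i` of `A` is an eigenvector of `(1 - h • A) ^ n` with eigenvalue
`(1 - h λᵢ) ^ n`, which equals `exp (n log (1 - h λᵢ))` because `1 - h λᵢ ≠ 0`. Expanding `θ₀`
in the orthonormal basis `u` then gives both sides as the same sum. -/

open Matrix

theorem Complex.exp_nat_mul_log {z : ℂ} (hz : z ≠ 0) (n : ℕ) :
    Complex.exp (n * Complex.log z) = z ^ n := by
  rw [Complex.exp_nat_mul, Complex.exp_log hz]

namespace Matrix

variable {ι R : Type*} [Fintype ι] [DecidableEq ι] [CommRing R]

theorem pow_mulVec_of_mulVec_eq_smul {M : Matrix ι ι R} {v : ι → R} {μ : R}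
    (hv : M *ᵥ v = μ • v) (n : ℕ) : (M ^ n) *ᵥ v = μ ^ n • v := by
  induction n with
  | zero => simp
  | succ n ih => rw [pow_succ', ← mulVec_mulVec, ih, mulVec_smul, hv, smul_smul, pow_succ]

theorem one_sub_smul_mulVec_of_mulVec_eq_smul {A : Matrix ι ι R} {v : ι → R} {μ : R}
    (hv : A *ᵥ v = μ • v) (h : R) : (1 - h • A) *ᵥ v = (1 - h * μ) • v := by
  rw [sub_mulVec, one_mulVec, smul_mulVec, hv, smul_smul, sub_smul, one_smul]

/-- The matrix `U` with rows `u i` is square, so `U * Uᵀ = 1` forces `Uᵀ * U = 1`, the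
completeness relation. -/
theorem eq_sum_dotProduct_smul_of_orthonormal {u : ι → ι → R}
    (hu : ∀ i j, u i ⬝ᵥ u j = if i = j then 1 else 0) (x : ι → R) :
    x = ∑ i, (x ⬝ᵥ u i) • u i := by
  have hUUt : of u * (of u)ᵀ = 1 := by
    ext i j
    simpa [mul_apply, one_apply, dotProduct] using hu i j
  calc x = ((of u)ᵀ * of u) *ᵥ x := by rw [mul_eq_one_comm.mp hUUt, one_mulVec]
    _ = ∑ i, (x ⬝ᵥ u i) • u i := by
      rw [← mulVec_mulVec, mulVec_transpose, vecMul_eq_sum]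
      simp only [mulVec, dotProduct_comm]
      rfl

theorem mulVec_eq_sum_of_orthonormal_eigenvectors {M : Matrix ι ι R} {u : ι → ι → R}
    {μ : ι → R} (hu : ∀ i j, u i ⬝ᵥ u j = if i = j then 1 else 0)
    (hM : ∀ i, M *ᵥ u i = μ i • u i) (x : ι → R) :
    M *ᵥ x = ∑ i, (μ i * (x ⬝ᵥ u i)) • u i := by
  conv_lhs => rw [eq_sum_dotProduct_smul_of_orthonormal hu x]
  simp only [mulVec_sum, mulVec_smul, hM, smul_smul, mul_comm]

end Matrix

theorem principal_flow_exact_on_quadratics_general (D : ℕ) (A : Matrix (Fin D) (Fin D) ℝ)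
    (lam : Fin D → ℝ) (u : Fin D → (Fin D → ℝ))
    (heig : ∀ i, A.mulVec (u i) = lam i • u i)
    (horth : ∀ i j, u i ⬝ᵥ u j = if i = j then (1 : ℝ) else 0)
    (h : ℝ) (hne : ∀ i, 1 - h * lam i ≠ 0)
    (θ₀ : Fin D → ℝ) (n : ℕ) :
    (∑ i, fun k => Complex.exp (n * Complex.log (1 - (h : ℂ) * (lam i : ℂ))) *
        ((θ₀ ⬝ᵥ u i : ℝ) : ℂ) * ((u i k : ℝ) : ℂ))
      = fun k => ((((1 - h • A) ^ n).mulVec θ₀ k : ℝ) : ℂ) := by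
  have hgd := mulVec_eq_sum_of_orthonormal_eigenvectors horth
    (fun i => pow_mulVec_of_mulVec_eq_smul
      (one_sub_smul_mulVec_of_mulVec_eq_smul (heig i) h) n) θ₀
  have hexp : ∀ i, Complex.exp (n * Complex.log (1 - (h : ℂ) * (lam i : ℂ)))
      = ((1 - h * lam i : ℝ) : ℂ) ^ n := fun i => by
    push_cast
    exact Complex.exp_nat_mul_log (by exact_mod_cast hne i) n
  funext k
  simp only [hgd, Finset.sum_apply, hexp, Pi.smul_apply, smul_eq_mul]
  push_cast
  ring

/-- For a real symmetric matrix `A` with eigenvalues `λ_i` and orthonormal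
eigenvectors `u_i`, `h > 0` with `1 - hλ_i ≠ 0`, and any `θ₀ ∈ ℝ^D` and `n : ℕ`,
`∑_i exp(n·log(1 - hλ_i)) ⟨θ₀,u_i⟩ u_i = (I - hA)^n θ₀` as vectors in `ℂ^D`: the
principal flow's closed-form solution at time `t = nh` reproduces the gradient descent
iterates for the quadratic loss `E(θ) = ½θᵀAθ`. -/
theorem principal_flow_exact_on_quadratics (D : ℕ) (A : Matrix (Fin D) (Fin D) ℝ)
    (hA : A.IsSymm) (lam : Fin D → ℝ) (u : Fin D → (Fin D → ℝ))
    (heig : ∀ i, A.mulVec (u i) = lam i • u i)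
    (horth : ∀ i j, u i ⬝ᵥ u j = if i = j then (1 : ℝ) else 0)
    (h : ℝ) (hh : 0 < h) (hne : ∀ i, 1 - h * lam i ≠ 0)
    (θ₀ : Fin D → ℝ) (n : ℕ) :
    (∑ i, fun k => Complex.exp (n * Complex.log (1 - (h : ℂ) * (lam i : ℂ))) *
        ((θ₀ ⬝ᵥ u i : ℝ) : ℂ) * ((u i k : ℝ) : ℂ))
      = fun k => ((((1 - h • A) ^ n).mulVec θ₀ k : ℝ) : ℂ) :=
  principal_flow_exact_on_quadratics_general D A lam u heig horth h hne θ₀ n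
end

section
/- Let A be a real symmetric D×D matrix with eigenvalues λ_1,…,λ_D and orthonormal eigenvectors u_1,…,u_D, let h > 0 satisfy 1 - hλ_i ≠ 0 for all i, and let θ₀ ∈ ℝ^D. Define θ : ℝ → ℂ^D by θ(t) = ∑_{i=1}^D exp((t/h)·log(1 - hλ_i)) ⟨θ₀, u_i⟩ u_i. Then θ is differentiable and satisfies the principal flow equation for the quadratic loss E(θ) = ½θᵀAθ: θ'(t) = ∑_{i=1}^D (log(1 - hλ_i)/h) ⟨θ(t), u_i⟩ u_i, which equals ∑_i (log(1-hλ_i)/(hλ_i)) λ_i ⟨θ(t), u_i⟩ u_i, the PF vector field evaluated at θ(t). -/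
/-!
Each mode `exp ((t / h) log (1 - h λ_i))` is a complex exponential in `t`, whose derivative is
`log (1 - h λ_i) / h` times itself, and orthonormality of the `u_i` recovers that mode's
coefficient from `θ(t)` as `⟨θ(t), u_i⟩`. The second identity is cancellation of `λ_i`,
which also holds when `λ_i = 0` because then `log (1 - h λ_i) = log 1 = 0`.
-/

open Matrix Complex

theorem sum_apply_mul_eq_coeff_of_orthonormal {ι n : Type*} [Fintype ι] [Fintype n]
    [DecidableEq ι] {u : ι → n → ℝ}
    (horth : ∀ i j, u i ⬝ᵥ u j = if i = j then (1 : ℝ) else 0) (a : ι → ℂ) (i : ι) :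
    ∑ m, (∑ j, fun k => a j * (u j k : ℂ)) m * (u i m : ℂ) = a i := by
  have hcoeff : ∀ j, ∑ m, a j * (u j m : ℂ) * (u i m : ℂ) = a j * ((u j ⬝ᵥ u i : ℝ) : ℂ) := by
    intro j
    simp only [dotProduct, ofReal_sum, ofReal_mul, Finset.mul_sum, mul_assoc]
  simp only [Finset.sum_apply, Finset.sum_mul]
  rw [Finset.sum_comm]
  simp [hcoeff, horth, apply_ite]

theorem hasDerivAt_cexp_div_mul (h L : ℂ) (t : ℝ) :
    HasDerivAt (fun s : ℝ => cexp (s / h * L)) (L / h * cexp (t / h * L)) t := by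
  have hlin : HasDerivAt (fun z : ℂ => z / h * L) (1 / h * L) (t : ℂ) :=
    ((hasDerivAt_id _).div_const h).mul_const L
  convert hlin.cexp.comp_ofReal using 1
  ring

theorem hasDerivAt_sum_cexp_modes {ι n : Type*} [Fintype ι] (h : ℂ) (L c : ι → ℂ)
    (v : ι → n → ℂ) (t : ℝ) :
    HasDerivAt (fun s : ℝ => ∑ i, fun k => cexp (s / h * L i) * c i * v i k)
      (∑ i, fun k => L i / h * (cexp (t / h * L i) * c i) * v i k) t := by
  rw [hasDerivAt_pi]
  intro k
  simp only [Finset.sum_apply]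
  refine HasDerivAt.fun_sum fun i _ => ?_
  have hmode := ((hasDerivAt_cexp_div_mul h (L i) t).mul_const (c i)).mul_const (v i k)
  rwa [mul_assoc (L i / h)] at hmode

theorem log_one_sub_mul_div_mul_mul (h l x : ℂ) :
    log (1 - h * l) / (h * l) * (l * x) = log (1 - h * l) / h * x := by
  rcases eq_or_ne l 0 with rfl | hl
  · simp
  · calc log (1 - h * l) / (h * l) * (l * x) = log (1 - h * l) * l / (h * l) * x := by ring
      _ = log (1 - h * l) / h * x := by rw [mul_div_mul_right _ _ hl]

theorem principal_flow_solution_quadratic_general (D : ℕ)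
    (lam : Fin D → ℝ) (u : Fin D → (Fin D → ℝ))
    (horth : ∀ i j, u i ⬝ᵥ u j = if i = j then (1 : ℝ) else 0)
    (h : ℝ)
    (θ₀ : Fin D → ℝ) (θ : ℝ → (Fin D → ℂ))
    (hθ : θ = fun t : ℝ => ∑ i, fun k =>
      Complex.exp (((t : ℂ) / (h : ℂ)) * Complex.log (1 - (h : ℂ) * (lam i : ℂ))) *
        ((θ₀ ⬝ᵥ u i : ℝ) : ℂ) * ((u i k : ℝ) : ℂ))
    (t : ℝ) :
    HasDerivAt θ
      (∑ i, fun k => (Complex.log (1 - (h : ℂ) * (lam i : ℂ)) / (h : ℂ)) *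
        (∑ m, θ t m * ((u i m : ℝ) : ℂ)) * ((u i k : ℝ) : ℂ)) t ∧
    (∑ i, fun k => (Complex.log (1 - (h : ℂ) * (lam i : ℂ)) / (h : ℂ)) *
        (∑ m, θ t m * ((u i m : ℝ) : ℂ)) * ((u i k : ℝ) : ℂ))
      = ∑ i, fun k => (Complex.log (1 - (h : ℂ) * (lam i : ℂ)) / ((h : ℂ) * (lam i : ℂ))) *
          ((lam i : ℂ) * (∑ m, θ t m * ((u i m : ℝ) : ℂ))) * ((u i k : ℝ) : ℂ) := by
  have hcoord : ∀ i, ∑ m, θ t m * ((u i m : ℝ) : ℂ) =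
      cexp (t / h * log (1 - h * lam i)) * ((θ₀ ⬝ᵥ u i : ℝ) : ℂ) := fun i => by
    subst hθ
    exact sum_apply_mul_eq_coeff_of_orthonormal horth
      (fun j => cexp (t / h * log (1 - h * lam j)) * ((θ₀ ⬝ᵥ u j : ℝ) : ℂ)) i
  refine ⟨?_, by simp only [log_one_sub_mul_div_mul_mul]⟩
  simp only [hcoord]
  subst hθ
  exact hasDerivAt_sum_cexp_modes _ _ _ (fun i k => (u i k : ℂ)) t

/-- With `A` real symmetric, eigen-data `(λ_i, u_i)`, `h > 0`, `1 - hλ_i ≠ 0`,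
and `θ(t) = ∑_i exp((t/h)·log(1 - hλ_i)) ⟨θ₀,u_i⟩ u_i`, the curve `θ` is differentiable
and satisfies the principal flow equation for the quadratic loss `E(θ) = ½θᵀAθ`:
`θ'(t) = ∑_i (log(1 - hλ_i)/h) ⟨θ(t),u_i⟩ u_i`, which equals
`∑_i (log(1-hλ_i)/(hλ_i)) λ_i ⟨θ(t),u_i⟩ u_i`, the PF vector field at `θ(t)`. -/
theorem principal_flow_solution_quadratic (D : ℕ) (A : Matrix (Fin D) (Fin D) ℝ)
    (hA : A.IsSymm) (lam : Fin D → ℝ) (u : Fin D → (Fin D → ℝ))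
    (heig : ∀ i, A.mulVec (u i) = lam i • u i)
    (horth : ∀ i j, u i ⬝ᵥ u j = if i = j then (1 : ℝ) else 0)
    (h : ℝ) (hh : 0 < h) (hne : ∀ i, 1 - h * lam i ≠ 0)
    (θ₀ : Fin D → ℝ) (θ : ℝ → (Fin D → ℂ))
    (hθ : θ = fun t : ℝ => ∑ i, fun k =>
      Complex.exp (((t : ℂ) / (h : ℂ)) * Complex.log (1 - (h : ℂ) * (lam i : ℂ))) *
        ((θ₀ ⬝ᵥ u i : ℝ) : ℂ) * ((u i k : ℝ) : ℂ))
    (t : ℝ) :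
    HasDerivAt θ
      (∑ i, fun k => (Complex.log (1 - (h : ℂ) * (lam i : ℂ)) / (h : ℂ)) *
        (∑ m, θ t m * ((u i m : ℝ) : ℂ)) * ((u i k : ℝ) : ℂ)) t ∧
    (∑ i, fun k => (Complex.log (1 - (h : ℂ) * (lam i : ℂ)) / (h : ℂ)) *
        (∑ m, θ t m * ((u i m : ℝ) : ℂ)) * ((u i k : ℝ) : ℂ))
      = ∑ i, fun k => (Complex.log (1 - (h : ℂ) * (lam i : ℂ)) / ((h : ℂ) * (lam i : ℂ))) *
          ((lam i : ℂ) * (∑ m, θ t m * ((u i m : ℝ) : ℂ))) * ((u i k : ℝ) : ℂ) :=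
  principal_flow_solution_quadratic_general D lam u horth h θ₀ θ hθ t
end

section
/- Let h > 0 and λ > 0 with hλ ≠ 1. Then the real part of the principal-flow coefficient α_PF(hλ) = log(1 - hλ)/(hλ) satisfies: Re(α_PF(hλ)) < 0 if and only if hλ < 2; Re(α_PF(hλ)) > 0 if and only if hλ > 2; and Re(α_PF(hλ)) = 0 if and only if hλ = 2. Moreover, for 1 < hλ, log(1 - hλ) = log(hλ - 1) + iπ, so for 1 < hλ < 2 the coefficient is complex with negative real part Re(α_PF) = log(hλ-1)/(hλ) < 0, and for hλ > 2 it is complex with positive real part. -/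
/-! For real `x` the real part of `log (1 - x) / x` is `Real.log |1 - x| / x`, so for `x > 0` its
sign is that of `log |1 - x|`, i.e. of `|1 - x| - 1`, which changes sign exactly at `x = 2`
(the logarithmic singularity at `x = 1` excluded). Past `x = 1` the argument `1 - x` lies on the
negative real axis, where the principal logarithm has imaginary part `π`. -/

namespace Real

variable {x : ℝ}

theorem log_one_sub_neg_iff (hx : 0 < x) (hx1 : x ≠ 1) : log (1 - x) < 0 ↔ x < 2 := by
  have habs : 0 < |1 - x| := abs_pos.mpr (sub_ne_zero.mpr (Ne.symm hx1))
  rw [← log_abs, log_neg_iff habs, abs_lt]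
  constructor
  · rintro ⟨h, -⟩
    linarith
  · intro h
    constructor <;> linarith

theorem log_one_sub_pos_iff (hx : 0 < x) : 0 < log (1 - x) ↔ 2 < x := by
  rw [← log_abs, log_pos_iff (abs_nonneg _), lt_abs]
  constructor
  · rintro (h | h) <;> linarith
  · intro h
    right
    linarith

theorem log_one_sub_eq_zero_iff (hx : 0 < x) (hx1 : x ≠ 1) : log (1 - x) = 0 ↔ x = 2 := by
  rw [log_eq_zero]
  constructor
  · rintro (h | h | h)
    · exact absurd (sub_eq_zero.mp h).symm hx1
    · linarith
    · linarith
  · intro h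
    right; right
    rw [h]
    norm_num

end Real

namespace Complex

theorem log_ofReal_of_neg {x : ℝ} (hx : x < 0) : log (x : ℂ) = Real.log (-x) + Real.pi * I := by
  apply Complex.ext
  · simp [log_ofReal_re, Real.log_neg_eq_log]
  · simp [log_im, arg_ofReal_of_neg hx]

theorem re_log_one_sub_div (x : ℝ) : (log (1 - x) / x).re = Real.log (1 - x) / x := by
  rw [div_ofReal_re, ← ofReal_one, ← ofReal_sub, log_ofReal_re]

end Complex

/-- For `h > 0`, `λ > 0`, `hλ ≠ 1`, the real part of the principal-flow
coefficient `α_PF(hλ) = log(1 - hλ)/(hλ)` is negative iff `hλ < 2`, positive iff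
`hλ > 2`, zero iff `hλ = 2`; moreover for `hλ > 1`, `log(1 - hλ) = log(hλ - 1) + iπ`,
so for `1 < hλ < 2` the coefficient has negative real part `log(hλ-1)/(hλ)` and for
`hλ > 2` positive real part. -/
theorem principal_flow_coefficient_real_part_sign (h lam : ℝ) (hh : 0 < h)
    (hl : 0 < lam) (hne : h * lam ≠ 1) :
    ((Complex.log (1 - (h * lam : ℝ)) / ((h * lam : ℝ) : ℂ)).re < 0 ↔ h * lam < 2) ∧
    (0 < (Complex.log (1 - (h * lam : ℝ)) / ((h * lam : ℝ) : ℂ)).re ↔ 2 < h * lam) ∧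
    ((Complex.log (1 - (h * lam : ℝ)) / ((h * lam : ℝ) : ℂ)).re = 0 ↔ h * lam = 2) ∧
    (1 < h * lam →
      Complex.log (1 - (h * lam : ℝ)) = (Real.log (h * lam - 1) : ℂ) + Real.pi * Complex.I) ∧
    (1 < h * lam → h * lam < 2 →
      (Complex.log (1 - (h * lam : ℝ)) / ((h * lam : ℝ) : ℂ)).re
          = Real.log (h * lam - 1) / (h * lam) ∧
      (Complex.log (1 - (h * lam : ℝ)) / ((h * lam : ℝ) : ℂ)).re < 0) ∧
    (2 < h * lam → 0 < (Complex.log (1 - (h * lam : ℝ)) / ((h * lam : ℝ) : ℂ)).re) := by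
  set x := h * lam
  have hx : 0 < x := mul_pos hh hl
  have hneg : Real.log (1 - x) / x < 0 ↔ x < 2 := by
    rw [div_lt_iff₀ hx, zero_mul, Real.log_one_sub_neg_iff hx hne]
  have hpos : 0 < Real.log (1 - x) / x ↔ 2 < x := by
    rw [div_pos_iff_of_pos_right hx, Real.log_one_sub_pos_iff hx]
  have hzero : Real.log (1 - x) / x = 0 ↔ x = 2 := by
    rw [div_eq_zero_iff, or_iff_left hx.ne', Real.log_one_sub_eq_zero_iff hx hne]
  have hlog : 1 < x → Complex.log (1 - x) = (Real.log (x - 1) : ℂ) + Real.pi * Complex.I := by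
    intro h1
    rw [← Complex.ofReal_one, ← Complex.ofReal_sub, Complex.log_ofReal_of_neg (by linarith),
      neg_sub]
  simp only [Complex.re_log_one_sub_div]
  refine ⟨hneg, hpos, hzero, hlog, fun _ h2 => ⟨?_, hneg.mpr h2⟩, hpos.mpr⟩
  rw [← neg_sub, Real.log_neg_eq_log]
end

section
/- Let h > 0, λ > 0 with hλ ≠ 1, let μ = log(1 - hλ)/h ∈ ℂ, let z₀ ∈ ℂ with z₀ ≠ 0, and define z(t) = exp(tμ)·z₀. If 0 < hλ < 2 then z(t) → 0 as t → ∞, while if hλ > 2 then |z(t)| → ∞ as t → ∞. That is, the solution of the one-dimensional principal flow for E(z) = ½z² converges to the minimum exactly when hλ < 2 and diverges when hλ > 2. -/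
open Filter Topology

namespace Complex

theorem norm_exp_ofReal_mul (t : ℝ) (μ : ℂ) : ‖exp (t * μ)‖ = Real.exp (t * μ.re) := by
  rw [norm_exp, re_ofReal_mul]

theorem tendsto_exp_ofReal_mul_atTop_nhds_zero {μ : ℂ} (hμ : μ.re < 0) :
    Tendsto (fun t : ℝ => exp (t * μ)) atTop (𝓝 0) := by
  rw [tendsto_zero_iff_norm_tendsto_zero]
  simp_rw [norm_exp_ofReal_mul]
  exact Real.tendsto_exp_atBot.comp (tendsto_id.atTop_mul_const_of_neg hμ)

theorem tendsto_norm_exp_ofReal_mul_atTop {μ : ℂ} (hμ : 0 < μ.re) :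
    Tendsto (fun t : ℝ => ‖exp (t * μ)‖) atTop atTop := by
  simp_rw [norm_exp_ofReal_mul]
  exact Real.tendsto_exp_atTop.comp (tendsto_id.atTop_mul_const hμ)

theorem re_log_ofReal_div_ofReal (x h : ℝ) : (log x / h).re = Real.log |x| / h := by
  rw [div_ofReal_re, log_re, norm_real, Real.norm_eq_abs]

end Complex

namespace Real

theorem log_abs_one_sub_neg {a : ℝ} (h0 : 0 < a) (h2 : a < 2) (h1 : a ≠ 1) :
    log |1 - a| < 0 :=
  log_neg (abs_pos.2 (sub_ne_zero.2 h1.symm)) (abs_sub_lt_iff.2 ⟨by linarith, by linarith⟩)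

theorem log_abs_one_sub_pos {a : ℝ} (h2 : 2 < a) : 0 < log |1 - a| :=
  log_pos (lt_abs.2 (Or.inr (by linarith)))

end Real

/-- For `h > 0`, `λ > 0` with `hλ ≠ 1`, `μ = log(1 - hλ)/h ∈ ℂ` and
`z₀ ≠ 0`, the solution `z(t) = exp(tμ)·z₀` of the one-dimensional principal flow for
`E(z) = ½λz²` converges to `0` as `t → ∞` if `0 < hλ < 2` and its modulus diverges
to `∞` if `hλ > 2`. -/
theorem principal_flow_1d_convergence_divergence (h lam : ℝ) (hh : 0 < h) (hl : 0 < lam)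
    (hne : h * lam ≠ 1) (μ : ℂ) (hμ : μ = Complex.log (1 - (h * lam : ℝ)) / (h : ℂ))
    (z₀ : ℂ) (hz₀ : z₀ ≠ 0) :
    (h * lam < 2 →
      Tendsto (fun t : ℝ => Complex.exp ((t : ℂ) * μ) * z₀) atTop (nhds 0)) ∧
    (2 < h * lam →
      Tendsto (fun t : ℝ => ‖Complex.exp ((t : ℂ) * μ) * z₀‖) atTop atTop) := by
  have hre : μ.re = Real.log |1 - h * lam| / h := by
    rw [hμ, ← Complex.ofReal_one, ← Complex.ofReal_sub, Complex.re_log_ofReal_div_ofReal]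
  refine ⟨fun h2 => ?_, fun h2 => ?_⟩
  · have hμ_neg : μ.re < 0 := hre ▸
      div_neg_of_neg_of_pos (Real.log_abs_one_sub_neg (by positivity) h2 hne) hh
    simpa using (Complex.tendsto_exp_ofReal_mul_atTop_nhds_zero hμ_neg).mul_const z₀
  · have hμ_pos : 0 < μ.re := hre ▸ div_pos (Real.log_abs_one_sub_pos h2) hh
    simp_rw [norm_mul]
    exact (Complex.tendsto_norm_exp_ofReal_mul_atTop hμ_pos).atTop_mul_const (norm_pos_iff.2 hz₀)
end

section
/- Let A be a real symmetric D×D matrix and n a natural number. For h ∈ ℝ define the matrix M(h) = -∑_{p=0}^{n} (h^p/(p+1)) A^{p+1}, so that θ̇ = M(h)θ is the order-n truncated backward-error-analysis (principal) flow for the quadratic loss E(θ) = ½θᵀAθ. Then, as h → 0, exp(h·M(h)) - (I - hA) = O(h^{n+2}) in matrix norm; equivalently, the time-h solution of the truncated flow matches one gradient descent step θ ↦ (I - hA)θ with error of order h^{n+2} for every initial point. -/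
open Matrix

attribute [local instance] Matrix.linftyOpNormedRing Matrix.linftyOpNormedAlgebra

/-!
Writing `x = h • A`, one has `h • M h = -T x` with `T x = ∑_{k ≤ n+1} x^k / k` the Taylor
polynomial of `-log (1 - x)`, so the claim is that `exp (-T x) - (1 - x) = O(x^(n+2))`.
For a real number `x` this holds because `-T x = log (1 - x) + O(x^(n+2))`, whence
`exp (-T x) = (1 - x) (1 + O(x^(n+2)))`. A symmetric `A` is orthogonally diagonalisable, and
`x ↦ exp (-T x) - (1 - x)` commutes with every continuous algebra homomorphism, hence with
conjugation, with `diagonal` and with evaluation of coordinates; so the matrix defect is the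
conjugate of the diagonal matrix of the scalar defects at `h λᵢ`.
-/

open Asymptotics Filter Topology NormedSpace Finset

noncomputable def negLogOneSubTaylor {𝔸 : Type*} [Ring 𝔸] [Algebra ℝ 𝔸] (n : ℕ) (x : 𝔸) : 𝔸 :=
  ∑ p ∈ range (n + 1), (p + 1 : ℝ)⁻¹ • x ^ (p + 1)

/-- For `x = h • A`, `exp (-negLogOneSubTaylor n x)` is the time-`h` flow of the order-`n`
modified equation and `1 - x` the gradient step. -/
noncomputable def flowStepDefect {𝔸 : Type*} [NormedRing 𝔸] [NormedAlgebra ℚ 𝔸] [Algebra ℝ 𝔸]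
    (n : ℕ) (x : 𝔸) : 𝔸 :=
  exp (-negLogOneSubTaylor n x) - (1 - x)

theorem negLogOneSubTaylor_smul {𝔸 : Type*} [Ring 𝔸] [Algebra ℝ 𝔸] (n : ℕ) (h : ℝ) (x : 𝔸) :
    negLogOneSubTaylor n (h • x) =
      h • ∑ p ∈ range (n + 1), (h ^ p / (p + 1 : ℝ)) • x ^ (p + 1) := by
  simp only [negLogOneSubTaylor, smul_pow, Finset.smul_sum, smul_smul]
  refine Finset.sum_congr rfl fun p _ => ?_
  rw [pow_succ]
  ring_nf

theorem map_negLogOneSubTaylor {𝔸 𝔹 : Type*} [Ring 𝔸] [Algebra ℝ 𝔸] [Ring 𝔹] [Algebra ℝ 𝔹]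
    (φ : 𝔸 →ₐ[ℝ] 𝔹) (n : ℕ) (x : 𝔸) :
    φ (negLogOneSubTaylor n x) = negLogOneSubTaylor n (φ x) := by
  simp only [negLogOneSubTaylor, map_sum, map_smul, map_pow]

theorem map_flowStepDefect {𝔸 𝔹 : Type*} [NormedRing 𝔸] [NormedAlgebra ℚ 𝔸] [Algebra ℝ 𝔸]
    [CompleteSpace 𝔸] [NormedRing 𝔹] [NormedAlgebra ℚ 𝔹] [Algebra ℝ 𝔹]
    (φ : 𝔸 →ₐ[ℝ] 𝔹) (hφ : Continuous φ) (n : ℕ) (x : 𝔸) :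
    φ (flowStepDefect n x) = flowStepDefect n (φ x) := by
  simp only [flowStepDefect, map_sub, map_one, map_exp φ hφ, map_neg, map_negLogOneSubTaylor]

theorem Pi.flowStepDefect_apply {ι : Type*} [Fintype ι] (n : ℕ) (v : ι → ℝ) (i : ι) :
    flowStepDefect n v i = flowStepDefect n (v i) :=
  map_flowStepDefect (Pi.evalAlgHom ℝ (fun _ => ℝ) i) (continuous_apply i) n v

theorem Matrix.flowStepDefect_diagonal {ι : Type*} [Fintype ι] [DecidableEq ι] (n : ℕ)
    (v : ι → ℝ) : flowStepDefect n (diagonal v) = diagonal fun i => flowStepDefect n (v i) := by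
  have := map_flowStepDefect (diagonalAlgHom ℝ) continuous_id.matrix_diagonal n v
  rw [← funext (Pi.flowStepDefect_apply n v)]
  exact this.symm

theorem Real.negLogOneSubTaylor_eq (n : ℕ) (x : ℝ) :
    negLogOneSubTaylor n x = ∑ p ∈ range (n + 1), x ^ (p + 1) / (p + 1) := by
  simp only [negLogOneSubTaylor, smul_eq_mul, inv_mul_eq_div]

theorem Real.isBigO_negLogOneSubTaylor_add_log (n : ℕ) :
    (fun x : ℝ => negLogOneSubTaylor n x + Real.log (1 - x)) =O[𝓝 0] (· ^ (n + 2)) := by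
  refine IsBigO.of_bound 2 ?_
  filter_upwards [Metric.ball_mem_nhds (0 : ℝ) one_half_pos] with x hx
  rw [Metric.mem_ball, Real.dist_0_eq_abs] at hx
  rw [Real.norm_eq_abs, Real.norm_eq_abs, abs_pow, Real.negLogOneSubTaylor_eq]
  calc _ ≤ |x| ^ (n + 1 + 1) / (1 - |x|) := Real.abs_log_sub_add_sum_range_le (by linarith) _
    _ ≤ |x| ^ (n + 2) / 2⁻¹ := by gcongr; linarith
    _ = 2 * |x| ^ (n + 2) := by ring

theorem Real.isBigO_flowStepDefect (n : ℕ) :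
    (flowStepDefect n : ℝ → ℝ) =O[𝓝 0] (· ^ (n + 2)) := by
  set d := fun x : ℝ => negLogOneSubTaylor n x + Real.log (1 - x)
  have hd : d =O[𝓝 0] (· ^ (n + 2)) := Real.isBigO_negLogOneSubTaylor_add_log n
  have hd0 : Tendsto d (𝓝 0) (𝓝 0) :=
    hd.trans_tendsto (by simpa using (continuous_pow (n + 2)).tendsto (0 : ℝ))
  have hexp : (fun x => Real.exp (-d x) - 1) =O[𝓝 0] d := by
    have := (Real.hasDerivAt_exp 0).isBigO_sub.comp_tendsto (by simpa using hd0.neg)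
    simpa [Function.comp_def] using this
  have hfactor : (fun x : ℝ => 1 - x) =O[𝓝 0] (fun _ => (1 : ℝ)) :=
    (continuous_const.sub continuous_id).tendsto 0 |>.isBigO_one ℝ
  have hsplit : flowStepDefect n =ᶠ[𝓝 0] fun x => (1 - x) * (Real.exp (-d x) - 1) := by
    filter_upwards [Iio_mem_nhds one_pos] with x hx
    have hx : 0 < 1 - x := by linarith [Set.mem_Iio.mp hx]
    have hlog : -negLogOneSubTaylor n x = Real.log (1 - x) + -d x := by simp only [d]; ring
    rw [flowStepDefect, ← Real.exp_eq_exp_ℝ, hlog, Real.exp_add, Real.exp_log hx]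
    ring
  simpa using (hfactor.mul (hexp.trans hd)).congr' hsplit.symm EventuallyEq.rfl

open Unitary in
theorem Matrix.IsHermitian.flowStepDefect_smul {ι : Type*} [Fintype ι] [DecidableEq ι]
    {A : Matrix ι ι ℝ} (hA : A.IsHermitian) (n : ℕ) (h : ℝ) :
    flowStepDefect n (h • A) = conjStarAlgAut ℝ _ hA.eigenvectorUnitary
      (diagonal fun i => flowStepDefect n (h * hA.eigenvalues i)) := by
  set φ := (conjStarAlgAut ℝ (Matrix ι ι ℝ) hA.eigenvectorUnitary).toAlgEquiv.toAlgHom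
  have hφ : Continuous φ := (continuous_const.mul continuous_id).mul continuous_const
  have hsmul : h • A = φ (diagonal fun i => h * hA.eigenvalues i) := by
    conv_lhs => rw [hA.spectral_theorem]
    rw [← map_smul, ← diagonal_smul]
    rfl
  rw [hsmul, ← map_flowStepDefect φ hφ, Matrix.flowStepDefect_diagonal]
  rfl

theorem Matrix.IsHermitian.isBigO_flowStepDefect_smul {ι : Type*} [Fintype ι] [DecidableEq ι]
    {A : Matrix ι ι ℝ} (hA : A.IsHermitian) (n : ℕ) :
    (fun h : ℝ => flowStepDefect n (h • A)) =O[𝓝 0] (· ^ (n + 2)) := by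
  have hentry (c : ℝ) : (fun h : ℝ => flowStepDefect n (h * c)) =O[𝓝 0] (· ^ (n + 2)) := by
    have hc : Tendsto (· * c) (𝓝 (0 : ℝ)) (𝓝 0) := by
      simpa using (continuous_mul_const c).tendsto 0
    refine ((Real.isBigO_flowStepDefect n).comp_tendsto hc).trans ?_
    simpa [Function.comp_def, mul_pow, mul_comm] using
      isBigO_const_mul_self (c ^ (n + 2)) (· ^ (n + 2)) (𝓝 (0 : ℝ))
  have hdiag : (fun h : ℝ => diagonal fun i => flowStepDefect n (h * hA.eigenvalues i))
      =O[𝓝 0] (· ^ (n + 2)) :=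
    (isBigO_of_le _ fun h => (linfty_opNorm_diagonal _).le).trans
      (isBigO_pi.2 fun i => hentry (hA.eigenvalues i))
  simp_rw [hA.flowStepDefect_smul, Unitary.conjStarAlgAut_apply]
  simpa using ((isBigO_const_one ℝ _ _).mul hdiag).mul (isBigO_const_one ℝ _ _)

/-- For a real symmetric `A` and `n : ℕ`, with
`M(h) = -∑_{p=0}^{n} (h^p/(p+1)) A^{p+1}` the order-`n` truncated BEA (principal) flow
field for the quadratic loss `E(θ) = ½θᵀAθ`, the time-`h` solution of the truncated
flow matches one gradient descent step up to `O(h^{n+2})` in matrix norm: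
`exp(h·M(h)) - (I - hA) = O(h^{n+2})` as `h → 0`. -/
theorem truncated_bea_flow_order (D : ℕ) (A : Matrix (Fin D) (Fin D) ℝ)
    (hA : A.IsSymm) (n : ℕ)
    (M : ℝ → Matrix (Fin D) (Fin D) ℝ)
    (hM : M = fun h => -∑ p ∈ Finset.range (n + 1), (h ^ p / (p + 1 : ℝ)) • A ^ (p + 1)) :
    (fun h : ℝ => NormedSpace.exp (h • M h) - (1 - h • A))
      =O[nhds 0] (fun h : ℝ => h ^ (n + 2)) := by
  have hflow (h : ℝ) : exp (h • M h) - (1 - h • A) = flowStepDefect n (h • A) := by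
    rw [hM, flowStepDefect, negLogOneSubTaylor_smul, smul_neg]
    rfl
  simpa only [hflow] using (isHermitian_iff_isSymm.2 hA).isBigO_flowStepDefect_smul n
end

section
/- Let A be a real symmetric positive semidefinite D×D matrix, let h ≥ 0, n a natural number, and g ∈ ℝ^D. Then ⟨g, ∑_{p=0}^{n} (h^p/(p+1)) A^p g⟩ ≥ 0; equivalently, writing λ_i, u_i for the eigenvalues and orthonormal eigenvectors of A, ∑_{p=0}^{n} (h^p/(p+1)) ∑_{i=1}^D λ_i^p ⟨g,u_i⟩² ≥ 0. Consequently, along any order-n truncated backward-error-analysis flow θ̇ = -∑_{p=0}^{n} (h^p/(p+1)) A^p ∇E(θ) for a quadratic loss E with positive semidefinite Hessian A, the instantaneous change dE/dt = -⟨∇E, ∑_p (h^p/(p+1)) A^p ∇E⟩ is never positive, so such truncated flows can never capture the loss increases exhibited by gradient descent. -/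
open Matrix

namespace Matrix.PosSemidef

variable {n : Type*} [Fintype n]

open scoped ComplexOrder in
lemma sum_smul_pow {𝕜 : Type*} [RCLike 𝕜] [DecidableEq n] {A : Matrix n n 𝕜}
    (hA : A.PosSemidef) {s : Finset ℕ} {c : ℕ → ℝ} (hc : ∀ p ∈ s, 0 ≤ c p) :
    (∑ p ∈ s, c p • A ^ p).PosSemidef :=
  posSemidef_sum s fun p hp => (hA.pow p).smul (hc p hp)

lemma nonneg_of_mulVec_eq_smul {A : Matrix n n ℝ} (hA : A.PosSemidef) {v : n → ℝ} {μ : ℝ}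
    (hv : A *ᵥ v = μ • v) (hv0 : v ≠ 0) : 0 ≤ μ := by
  have hquad : 0 ≤ μ * (v ⬝ᵥ v) := by
    simpa [hv, dotProduct_smul] using hA.dotProduct_mulVec_nonneg v
  have hpos : 0 < v ⬝ᵥ v := by simpa using dotProduct_star_self_pos_iff.mpr hv0
  exact nonneg_of_mul_nonneg_left hquad hpos

end Matrix.PosSemidef

/-- For a real symmetric positive semidefinite `A` with eigen-data
`(λ_i, u_i)` (orthonormal), `h ≥ 0`, `n : ℕ` and `g ∈ ℝ^D`:
`⟨g, ∑_{p=0}^{n} (h^p/(p+1)) A^p g⟩ ≥ 0`, equivalently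
`∑_{p=0}^{n} (h^p/(p+1)) ∑_i λ_i^p ⟨g,u_i⟩² ≥ 0`; hence along any order-`n`
truncated BEA flow for a quadratic loss with PSD Hessian, `dE/dt ≤ 0`, so such
truncated flows never capture the loss increases exhibited by gradient descent. -/
theorem truncated_bea_flow_never_increases_quadratic_loss (D : ℕ)
    (A : Matrix (Fin D) (Fin D) ℝ) (hA : A.PosSemidef)
    (lam : Fin D → ℝ) (u : Fin D → (Fin D → ℝ))
    (heig : ∀ i, A.mulVec (u i) = lam i • u i)
    (horth : ∀ i j, u i ⬝ᵥ u j = if i = j then (1 : ℝ) else 0)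
    (h : ℝ) (hh : 0 ≤ h) (n : ℕ) (g : Fin D → ℝ) :
    0 ≤ g ⬝ᵥ (∑ p ∈ Finset.range (n + 1), (h ^ p / (p + 1 : ℝ)) • (A ^ p).mulVec g) ∧
    0 ≤ ∑ p ∈ Finset.range (n + 1), (h ^ p / (p + 1 : ℝ)) * ∑ i, lam i ^ p * (g ⬝ᵥ u i) ^ 2 := by
  have hcoeff (p : ℕ) : 0 ≤ h ^ p / (p + 1 : ℝ) := by positivity
  have hlam (i : Fin D) : 0 ≤ lam i := by
    refine hA.nonneg_of_mulVec_eq_smul (heig i) fun hu => ?_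
    simpa [hu] using horth i i
  constructor
  · simp_rw [← smul_mulVec, ← sum_mulVec]
    simpa using (hA.sum_smul_pow fun p _ => hcoeff p).dotProduct_mulVec_nonneg g
  · exact Finset.sum_nonneg fun p _ => mul_nonneg (hcoeff p) <|
      Finset.sum_nonneg fun i _ => mul_nonneg (pow_nonneg (hlam i) p) (sq_nonneg _)
end
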